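/- arXiv:2109.03222 — 3 statements merged into one kernel-verified Lean document; each statement's English description precedes it below -/
import Mathlib

section
/- Every one-sided derivative of S_a vanishes at the boundary: for all j ≥ 1, lim_{x→(a-c)^+} S_a^{(j)}(x) = 0 and lim_{x→a^-} S_a^{(j)}(x) = 0. -/
open Real Filter Set Topology MvPolynomial

/-! ### tanh lemmas -/

private lemma tanh_eq_exp' (t : ℝ) : Real.tanh t = (exp (2*t) - 1) / (exp (2*t) + 1) := by
  rw [Real.tanh_eq_sinh_div_cosh, Real.sinh_eq, Real.cosh_eq]
  have h1 : exp t ≠ 0 := (Real.exp_pos t).ne'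
  have h3 : exp (2*t) = exp t * exp t := by rw [two_mul, Real.exp_add]
  have h4 : exp t * exp (-t) = 1 := by rw [← Real.exp_add]; simp
  have h5 : rexp t + rexp (-t) ≠ 0 := by positivity
  have h6 : rexp (2*t) + 1 ≠ 0 := by positivity
  field_simp
  rw [mul_comm t 2, h3]
  linear_combination (-2 * Real.exp t) * h4

private lemma one_sub_tanh_sq' (t : ℝ) :
    1 - Real.tanh t ^ 2 = 4 * exp (2*t) / (exp (2*t) + 1)^2 := by
  rw [tanh_eq_exp']
  have h : exp (2*t) + 1 ≠ 0 := by positivity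
  field_simp
  ring

private lemma hasDerivAt_tanh' (x : ℝ) : HasDerivAt Real.tanh (1 - Real.tanh x ^ 2) x := by
  have hc : Real.cosh x ≠ 0 := (Real.cosh_pos (x := x)).ne'
  have h := (Real.hasDerivAt_sinh x).div (Real.hasDerivAt_cosh x) hc
  have heq : Real.tanh = fun y => Real.sinh y / Real.cosh y :=
    funext fun y => Real.tanh_eq_sinh_div_cosh y
  rw [heq]
  refine h.congr_deriv ?_
  have h2 := Real.cosh_sq_sub_sinh_sq x
  field_simp

private lemma tendsto_tanh_atBot' : Tendsto Real.tanh atBot (𝓝 (-1)) := by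
  have h : Tendsto (fun t : ℝ => exp (2*t)) atBot (𝓝 0) :=
    Real.tendsto_exp_atBot.comp (tendsto_id.const_mul_atBot two_pos)
  have h2 : Tendsto (fun s : ℝ => (s - 1)/(s + 1)) (𝓝 0) (𝓝 (-1)) := by
    have hco : ContinuousAt (fun s : ℝ => (s - 1)/(s + 1)) 0 := by
      apply ContinuousAt.div
      · fun_prop
      · fun_prop
      · norm_num
    simpa using hco.tendsto
  have h3 := h2.comp h
  apply h3.congr
  intro t
  simp only [Function.comp]
  rw [tanh_eq_exp']

private lemma tendsto_tanh_atTop' : Tendsto Real.tanh atTop (𝓝 1) := by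
  have h := tendsto_tanh_atBot'.comp tendsto_neg_atTop_atBot
  have hneg : ∀ x : ℝ, Real.tanh (-x) = - Real.tanh x := fun x => Real.tanh_neg x
  simp only [Function.comp_def, hneg] at h
  have h2 := h.neg
  simpa using h2

/-! ### the derivation and evaluation -/

noncomputable def Dv : Derivation ℝ (MvPolynomial (Fin 3) ℝ) (MvPolynomial (Fin 3) ℝ) :=
  MvPolynomial.mkDerivation ℝ
    ![X 0 ^ 2, X 1 ^ 2, (1 - X 2 ^ 2) * (X 0 ^ 2 + X 1 ^ 2)]

noncomputable def ev (a c : ℝ) (p : MvPolynomial (Fin 3) ℝ) (x : ℝ) : ℝ :=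
  MvPolynomial.eval ![1/(a-c-x), 1/(a-x), Real.tanh (1/(a-c-x) + 1/(a-x))] p

lemma Dv_X0 : Dv (X 0) = X 0 ^ 2 := by simp [Dv, MvPolynomial.mkDerivation_X]
lemma Dv_X1 : Dv (X 1) = X 1 ^ 2 := by simp [Dv, MvPolynomial.mkDerivation_X]
lemma Dv_X2 : Dv (X 2) = (1 - X 2 ^ 2) * (X 0 ^ 2 + X 1 ^ 2) := by
  simp [Dv, MvPolynomial.mkDerivation_X]

lemma ev_hasDerivAt (a c : ℝ) (p : MvPolynomial (Fin 3) ℝ) {x : ℝ} (hx : x ∈ Ioo (a-c) a) :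
    HasDerivAt (ev a c p) (ev a c (Dv p) x) x := by
  obtain ⟨hx1, hx2⟩ := hx
  have h1 : a - c - x ≠ 0 := by intro h; nlinarith
  have h2 : a - x ≠ 0 := by intro h; nlinarith
  have hv1 : HasDerivAt (fun y => 1/(a-c-y)) ((1/(a-c-x))^2) x := by
    have hb : HasDerivAt (fun y : ℝ => a - c - y) (-1) x := by
      simpa using ((hasDerivAt_id x).const_sub (a - c))
    have := hb.inv h1
    simp only [one_div]
    refine this.congr_deriv ?_
    field_simp
  have hv2 : HasDerivAt (fun y => 1/(a-y)) ((1/(a-x))^2) x := by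
    have hb : HasDerivAt (fun y : ℝ => a - y) (-1) x := by
      simpa using ((hasDerivAt_id x).const_sub a)
    have := hb.inv h2
    simp only [one_div]
    refine this.congr_deriv ?_
    field_simp
  have hu : HasDerivAt (fun y => 1/(a-c-y) + 1/(a-y)) ((1/(a-c-x))^2 + (1/(a-x))^2) x :=
    hv1.add hv2
  have hT : HasDerivAt (fun y => Real.tanh (1/(a-c-y) + 1/(a-y)))
      ((1 - Real.tanh (1/(a-c-x) + 1/(a-x)) ^ 2) * ((1/(a-c-x))^2 + (1/(a-x))^2)) x :=
    (hasDerivAt_tanh' _).comp x hu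
  induction p using MvPolynomial.induction_on with
  | C r =>
    have e1 : ev a c (C r) = fun _ => r := by funext y; simp [ev]
    have e2 : ev a c (Dv (C r)) x = 0 := by
      rw [MvPolynomial.derivation_C (D := Dv)]; simp [ev]
    rw [e1, e2]; exact hasDerivAt_const x r
  | add p q hp hq =>
    have e1 : ev a c (p + q) = fun y => ev a c p y + ev a c q y := by
      funext y; simp [ev]
    have e2 : ev a c (Dv (p + q)) x = ev a c (Dv p) x + ev a c (Dv q) x := by
      rw [map_add]; simp [ev]
    rw [e1, e2]; exact hp.add hq
  | mul_X p i hp =>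
    have hleib : Dv (p * X i) = p * Dv (X i) + X i * Dv p := by
      rw [Derivation.leibniz, smul_eq_mul, smul_eq_mul]
    have hXi : HasDerivAt (ev a c (X i)) (ev a c (Dv (X i)) x) x := by
      fin_cases i
      · show HasDerivAt (ev a c (X 0)) (ev a c (Dv (X 0)) x) x
        have e1 : ev a c (X 0) = fun y => 1/(a-c-y) := by funext y; simp [ev]
        have e2 : ev a c (Dv (X 0)) x = (1/(a-c-x))^2 := by rw [Dv_X0]; simp [ev]
        rw [e1, e2]; exact hv1
      · show HasDerivAt (ev a c (X 1)) (ev a c (Dv (X 1)) x) x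
        have e1 : ev a c (X 1) = fun y => 1/(a-y) := by funext y; simp [ev]
        have e2 : ev a c (Dv (X 1)) x = (1/(a-x))^2 := by rw [Dv_X1]; simp [ev]
        rw [e1, e2]; exact hv2
      · show HasDerivAt (ev a c (X 2)) (ev a c (Dv (X 2)) x) x
        have e1 : ev a c (X 2) = fun y => Real.tanh (1/(a-c-y) + 1/(a-y)) := by
          funext y; simp [ev]
        have e2 : ev a c (Dv (X 2)) x
            = (1 - Real.tanh (1/(a-c-x) + 1/(a-x)) ^ 2) * ((1/(a-c-x))^2 + (1/(a-x))^2) := by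
          rw [Dv_X2]; simp [ev]
        rw [e1, e2]; exact hT
    have e1 : ev a c (p * X i) = fun y => ev a c p y * ev a c (X i) y := by
      funext y; simp [ev]
    have e2 : ev a c (Dv (p * X i)) x
        = ev a c (Dv p) x * ev a c (X i) x + ev a c p x * ev a c (Dv (X i)) x := by
      rw [hleib]; simp [ev]; ring
    rw [e1, e2]; exact hp.mul hXi

/-! ### elementary limits -/

private lemma exp_mul_pow_atBot (m : ℕ) :
    Tendsto (fun t : ℝ => exp (2*t) * t^m) atBot (𝓝 0) := by
  have h1 : Tendsto (fun s : ℝ => s^m * exp (-s)) atTop (𝓝 0) :=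
    tendsto_pow_mul_exp_neg_atTop_nhds_zero m
  have h2 : Tendsto (fun t : ℝ => -2*t) atBot atTop :=
    Tendsto.const_mul_atBot_of_neg (by norm_num : (-2:ℝ) < 0) tendsto_id
  have h3 := (h1.comp h2).const_mul (((-2:ℝ)^m)⁻¹)
  rw [mul_zero] at h3
  apply h3.congr
  intro t
  simp only [Function.comp]
  have h5 : (-2*t:ℝ)^m = (-2)^m * t^m := by rw [mul_pow]
  have h4 : ((-2:ℝ))^m ≠ 0 := pow_ne_zero _ (by norm_num)
  have h6 : Real.exp (-(-2*t)) = Real.exp (2*t) := by norm_num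
  rw [h5, h6]
  field_simp

private lemma exp_neg_mul_pow_atTop (m : ℕ) :
    Tendsto (fun t : ℝ => exp (-(2*t)) * t^m) atTop (𝓝 0) := by
  have h1 : Tendsto (fun s : ℝ => s^m * exp (-s)) atTop (𝓝 0) :=
    tendsto_pow_mul_exp_neg_atTop_nhds_zero m
  have h2 : Tendsto (fun t : ℝ => 2*t) atTop atTop :=
    Tendsto.const_mul_atTop (by norm_num : (0:ℝ) < 2) tendsto_id
  have h3 := (h1.comp h2).const_mul (((2:ℝ)^m)⁻¹)
  rw [mul_zero] at h3
  apply h3.congr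
  intro t
  simp only [Function.comp]
  have h5 : (2*t:ℝ)^m = 2^m * t^m := by rw [mul_pow]
  have h4 : ((2:ℝ))^m ≠ 0 := pow_ne_zero _ (by norm_num)
  rw [h5]
  field_simp

section LeftRight
variable {a c : ℝ}

lemma hv1_atBot (ha : 0 < a - c) : Tendsto (fun x => 1/(a-c-x)) (𝓝[>] (a-c)) atBot := by
  have h0 : Tendsto (fun x : ℝ => x - (a-c)) (𝓝[>] (a-c)) (𝓝[>] (0:ℝ)) := by
    apply tendsto_nhdsWithin_of_tendsto_nhds_of_eventually_within
    · have h := ((continuous_sub_right (a-c)).tendsto (a-c)).mono_left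
        (nhdsWithin_le_nhds (s := Ioi (a-c)))
      simpa using h
    · filter_upwards [self_mem_nhdsWithin] with x hx
      simp only [mem_Ioi] at hx ⊢
      linarith
  have h1 := tendsto_inv_nhdsGT_zero.comp h0
  have h2 := tendsto_neg_atTop_atBot.comp h1
  apply h2.congr
  intro x
  simp only [Function.comp]
  rw [one_div, ← inv_neg]
  ring_nf

lemma hv2_atTop (hc : 0 < c) : Tendsto (fun x => 1/(a-x)) (𝓝[<] a) atTop := by
  have h0 : Tendsto (fun x : ℝ => a - x) (𝓝[<] a) (𝓝[>] (0:ℝ)) := by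
    apply tendsto_nhdsWithin_of_tendsto_nhds_of_eventually_within
    · have h : Continuous (fun x : ℝ => a - x) := by fun_prop
      have h2 := (h.tendsto a).mono_left (nhdsWithin_le_nhds (s := Iio a))
      simpa using h2
    · filter_upwards [self_mem_nhdsWithin] with x hx
      simp only [mem_Iio] at hx
      simp only [mem_Ioi]
      linarith
  have h1 := tendsto_inv_nhdsGT_zero.comp h0
  apply h1.congr
  intro x
  rw [one_div]
  rfl

lemma hv2_left (hc : 0 < c) : Tendsto (fun x => 1/(a-x)) (𝓝[>] (a-c)) (𝓝 (1/c)) := by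
  have hcont : ContinuousAt (fun x => 1/(a-x)) (a-c) := by
    apply ContinuousAt.div continuousAt_const (by fun_prop)
    intro h
    nlinarith [h]
  have h := hcont.tendsto.mono_left (nhdsWithin_le_nhds (s := Ioi (a-c)))
  have he : (1:ℝ)/(a-(a-c)) = 1/c := by norm_num
  rw [he] at h
  exact h

lemma hv1_right (hc : 0 < c) : Tendsto (fun x => 1/(a-c-x)) (𝓝[<] a) (𝓝 (-(1/c))) := by
  have hcont : ContinuousAt (fun x => 1/(a-c-x)) a := by
    apply ContinuousAt.div continuousAt_const (by fun_prop)
    intro h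
    nlinarith [h]
  have h := hcont.tendsto.mono_left (nhdsWithin_le_nhds (s := Iio a))
  have he : (1:ℝ)/(a-c-a) = -(1/c) := by
    have h7 : a - c - a = -c := by ring
    rw [h7]
    field_simp
  rw [he] at h
  exact h

lemma hu_atBot (ha : 0 < a - c) (hc : 0 < c) :
    Tendsto (fun x => 1/(a-c-x) + 1/(a-x)) (𝓝[>] (a-c)) atBot :=
  (hv1_atBot ha).atBot_add (hv2_left hc)

lemma hu_atTop (ha : 0 < a - c) (hc : 0 < c) :
    Tendsto (fun x => 1/(a-c-x) + 1/(a-x)) (𝓝[<] a) atTop :=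
  (hv1_right hc).add_atTop (hv2_atTop hc)

lemma key_left (ha : 0 < a - c) (hc : 0 < c) (m : ℕ) :
    Tendsto (fun x => (1 - Real.tanh (1/(a-c-x) + 1/(a-x)) ^ 2) * (1/(a-c-x))^m)
      (𝓝[>] (a-c)) (𝓝 0) := by
  have hA : Tendsto (fun x => exp (2*(1/(a-c-x))) * (1/(a-c-x))^m) (𝓝[>] (a-c)) (𝓝 0) :=
    (exp_mul_pow_atBot m).comp (hv1_atBot ha)
  have hB : Tendsto (fun x => 4 * exp (2*(1/(a-x)))) (𝓝[>] (a-c)) (𝓝 (4 * exp (2*(1/c)))) :=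
    ((Real.continuous_exp.tendsto _).comp ((hv2_left hc).const_mul 2)).const_mul 4
  have hE : Tendsto (fun x => exp (2*(1/(a-c-x) + 1/(a-x)))) (𝓝[>] (a-c)) (𝓝 0) :=
    Real.tendsto_exp_atBot.comp (Tendsto.const_mul_atBot two_pos (hu_atBot ha hc))
  have hC : Tendsto (fun x => ((exp (2*(1/(a-c-x) + 1/(a-x))) + 1)^2)⁻¹) (𝓝[>] (a-c)) (𝓝 1) := by
    have h1 := ((hE.add_const 1).pow 2).inv₀ (by norm_num)
    simpa using h1
  have h := (hA.mul hB).mul hC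
  rw [zero_mul, zero_mul] at h
  apply h.congr
  intro x
  rw [one_sub_tanh_sq']
  rw [mul_add, Real.exp_add]
  field_simp

lemma key_right (ha : 0 < a - c) (hc : 0 < c) (m : ℕ) :
    Tendsto (fun x => (1 - Real.tanh (1/(a-c-x) + 1/(a-x)) ^ 2) * (1/(a-x))^m)
      (𝓝[<] a) (𝓝 0) := by
  have hA : Tendsto (fun x => exp (-(2*(1/(a-x)))) * (1/(a-x))^m) (𝓝[<] a) (𝓝 0) :=
    (exp_neg_mul_pow_atTop m).comp (hv2_atTop hc)
  have hB : Tendsto (fun x => 4 * exp (-(2*(1/(a-c-x))))) (𝓝[<] a)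
      (𝓝 (4 * exp (-(2*(-(1/c)))))) :=
    ((Real.continuous_exp.tendsto _).comp (((hv1_right hc).const_mul 2).neg)).const_mul 4
  have hE : Tendsto (fun x => exp (-(2*(1/(a-c-x) + 1/(a-x))))) (𝓝[<] a) (𝓝 0) :=
    Real.tendsto_exp_atBot.comp
      (tendsto_neg_atTop_atBot.comp (Tendsto.const_mul_atTop two_pos (hu_atTop ha hc)))
  have hC : Tendsto (fun x => ((exp (-(2*(1/(a-c-x) + 1/(a-x)))) + 1)^2)⁻¹) (𝓝[<] a) (𝓝 1) := by
    have h1 := ((hE.add_const 1).pow 2).inv₀ (by norm_num)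
    simpa using h1
  have h := (hA.mul hB).mul hC
  rw [zero_mul, zero_mul] at h
  apply h.congr
  intro x
  have hid : ∀ t : ℝ, 1 - Real.tanh t ^ 2 = 4 * exp (-(2*t)) / (exp (-(2*t)) + 1)^2 := by
    intro t
    rw [one_sub_tanh_sq']
    have h1 : exp (2*t) > 0 := Real.exp_pos _
    have h2 : exp (-(2*t)) > 0 := Real.exp_pos _
    have h3 : exp (2*t) * exp (-(2*t)) = 1 := by rw [← Real.exp_add]; simp
    field_simp
    nlinarith [sq_nonneg (exp (2*t)), sq_nonneg (exp (-(2*t)))]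
  rw [hid]
  rw [mul_add]
  rw [neg_add, Real.exp_add]
  field_simp

/-- Left endpoint: `(1 - tanh(u x)^2) * (polynomial in v₁, v₂, T) → 0`. -/
lemma tendsto_left_poly (ha : 0 < a - c) (hc : 0 < c) (g : MvPolynomial (Fin 3) ℝ) :
    Tendsto (fun x => (1 - Real.tanh (1/(a-c-x) + 1/(a-x)) ^ 2) * ev a c g x)
      (𝓝[>] (a-c)) (𝓝 0) := by
  have hrw : ∀ x, (1 - Real.tanh (1/(a-c-x) + 1/(a-x)) ^ 2) * ev a c g x
      = ∑ d ∈ g.support, ((1 - Real.tanh (1/(a-c-x) + 1/(a-x)) ^ 2) * (1/(a-c-x))^(d 0))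
          * (MvPolynomial.coeff d g * ((1/(a-x))^(d 1)
            * Real.tanh (1/(a-c-x) + 1/(a-x)) ^ (d 2))) := by
    intro x
    rw [ev, MvPolynomial.eval_eq', Finset.mul_sum]
    apply Finset.sum_congr rfl
    intro d _
    rw [Fin.prod_univ_three]
    simp only [Matrix.cons_val_zero, Matrix.cons_val_one, Matrix.head_cons,
      Matrix.cons_val_two, Matrix.tail_cons]
    ring
  simp only [hrw]
  have hz : (0:ℝ) = ∑ d ∈ g.support, (0:ℝ) := by simp
  rw [hz]
  apply tendsto_finset_sum
  intro d _
  have h1 := key_left ha hc (d 0)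
  have hT : Tendsto (fun x => Real.tanh (1/(a-c-x) + 1/(a-x))) (𝓝[>] (a-c)) (𝓝 (-1)) :=
    tendsto_tanh_atBot'.comp (hu_atBot ha hc)
  have h2 : Tendsto (fun x => MvPolynomial.coeff d g * ((1/(a-x))^(d 1)
      * Real.tanh (1/(a-c-x) + 1/(a-x)) ^ (d 2))) (𝓝[>] (a-c))
      (𝓝 (MvPolynomial.coeff d g * ((1/c)^(d 1) * (-1:ℝ) ^ (d 2)))) :=
    (((hv2_left hc).pow (d 1)).mul (hT.pow (d 2))).const_mul _
  have h3 := h1.mul h2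
  rw [zero_mul] at h3
  exact h3

/-- Right endpoint version. -/
lemma tendsto_right_poly (ha : 0 < a - c) (hc : 0 < c) (g : MvPolynomial (Fin 3) ℝ) :
    Tendsto (fun x => (1 - Real.tanh (1/(a-c-x) + 1/(a-x)) ^ 2) * ev a c g x)
      (𝓝[<] a) (𝓝 0) := by
  have hrw : ∀ x, (1 - Real.tanh (1/(a-c-x) + 1/(a-x)) ^ 2) * ev a c g x
      = ∑ d ∈ g.support, ((1 - Real.tanh (1/(a-c-x) + 1/(a-x)) ^ 2) * (1/(a-x))^(d 1))
          * (MvPolynomial.coeff d g * ((1/(a-c-x))^(d 0)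
            * Real.tanh (1/(a-c-x) + 1/(a-x)) ^ (d 2))) := by
    intro x
    rw [ev, MvPolynomial.eval_eq', Finset.mul_sum]
    apply Finset.sum_congr rfl
    intro d _
    rw [Fin.prod_univ_three]
    simp only [Matrix.cons_val_zero, Matrix.cons_val_one, Matrix.head_cons,
      Matrix.cons_val_two, Matrix.tail_cons]
    ring
  simp only [hrw]
  have hz : (0:ℝ) = ∑ d ∈ g.support, (0:ℝ) := by simp
  rw [hz]
  apply tendsto_finset_sum
  intro d _
  have h1 := key_right ha hc (d 1)
  have hT : Tendsto (fun x => Real.tanh (1/(a-c-x) + 1/(a-x))) (𝓝[<] a) (𝓝 1) :=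
    tendsto_tanh_atTop'.comp (hu_atTop ha hc)
  have h2 : Tendsto (fun x => MvPolynomial.coeff d g * ((1/(a-c-x))^(d 0)
      * Real.tanh (1/(a-c-x) + 1/(a-x)) ^ (d 2))) (𝓝[<] a)
      (𝓝 (MvPolynomial.coeff d g * ((-(1/c))^(d 0) * (1:ℝ) ^ (d 2)))) :=
    (((hv1_right hc).pow (d 0)).mul (hT.pow (d 2))).const_mul _
  have h3 := h1.mul h2
  rw [zero_mul] at h3
  exact h3

end LeftRight

/-! ### structural lemmas about the iterates of `Dv` -/

noncomputable def p0 : MvPolynomial (Fin 3) ℝ := C (1/2) * (1 - X 2)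

lemma Dv_iterate_div (j : ℕ) (hj : 1 ≤ j) :
    ∃ g, Dv^[j] p0 = (1 - X 2 ^ 2) * g := by
  induction j, hj using Nat.le_induction with
  | base =>
    refine ⟨C (1/2) * (-(X 0 ^ 2 + X 1 ^ 2)), ?_⟩
    have h1 : Dv p0 = C (1/2) * Dv (1 - X 2) := by
      rw [p0, Derivation.leibniz, smul_eq_mul, smul_eq_mul,
        MvPolynomial.derivation_C (D := Dv)]
      ring
    have h2 : Dv (1 - X 2) = -((1 - X 2 ^ 2) * (X 0 ^ 2 + X 1 ^ 2)) := by
      rw [map_sub, Derivation.map_one_eq_zero, Dv_X2]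
      ring
    rw [Function.iterate_one, h1, h2]
    ring
  | succ n hn ih =>
    obtain ⟨g, hg⟩ := ih
    have hX2sq : Dv (X 2 ^ 2) = 2 * X 2 * ((1 - X 2 ^ 2) * (X 0 ^ 2 + X 1 ^ 2)) := by
      rw [pow_two, Derivation.leibniz, Dv_X2, smul_eq_mul]
      ring
    have hOneSub : Dv (1 - X 2 ^ 2) = -(2 * X 2 * ((1 - X 2 ^ 2) * (X 0 ^ 2 + X 1 ^ 2))) := by
      rw [map_sub, Derivation.map_one_eq_zero, hX2sq]
      ring
    refine ⟨Dv g - g * (2 * X 2 * (X 0 ^ 2 + X 1 ^ 2)), ?_⟩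
    rw [Function.iterate_succ_apply', hg, Derivation.leibniz, smul_eq_mul, smul_eq_mul,
      hOneSub]
    ring

/-! ### main theorem -/

theorem Sa_derivs_vanish_at_boundary (a c : ℝ) (ha : 0 < a - c) (hc : 0 < c)
    (Sa : ℝ → ℝ)
    (hSa : ∀ x, Sa x = (1/2) * (1 - Real.tanh (1/(a - c - x) + 1/(a - x)))) :
    ∀ j : ℕ, 1 ≤ j →
      Tendsto (iteratedDeriv j Sa) (nhdsWithin (a - c) (Ioi (a - c))) (nhds 0) ∧
      Tendsto (iteratedDeriv j Sa) (nhdsWithin a (Iio a)) (nhds 0) := by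
  have hlt : a - c < a := by linarith
  -- the derivative formula on the open interval
  have hform : ∀ j : ℕ, ∀ x ∈ Ioo (a-c) a, iteratedDeriv j Sa x = ev a c (Dv^[j] p0) x := by
    intro j
    induction j with
    | zero =>
      intro x _
      rw [iteratedDeriv_zero, Function.iterate_zero, id, hSa x]
      simp [ev, p0]
    | succ n ih =>
      intro x hx
      rw [iteratedDeriv_succ]
      have hEq : iteratedDeriv n Sa =ᶠ[𝓝 x] ev a c (Dv^[n] p0) :=
        eventually_of_mem (isOpen_Ioo.mem_nhds hx) ih
      rw [hEq.deriv_eq, (ev_hasDerivAt a c _ hx).deriv, Function.iterate_succ_apply']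
  intro j hj
  obtain ⟨g, hg⟩ := Dv_iterate_div j hj
  have hfact : ∀ x ∈ Ioo (a-c) a, iteratedDeriv j Sa x
      = (1 - Real.tanh (1/(a-c-x) + 1/(a-x)) ^ 2) * ev a c g x := by
    intro x hx
    rw [hform j x hx, hg]
    simp [ev]
  constructor
  · apply Tendsto.congr' _ (tendsto_left_poly ha hc g)
    filter_upwards [Ioo_mem_nhdsGT hlt] with x hx
    exact (hfact x hx).symm
  · apply Tendsto.congr' _ (tendsto_right_poly ha hc g)
    filter_upwards [Ioo_mem_nhdsLT hlt] with x hx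
    exact (hfact x hx).symm
end

section
/- Projection function inequality: if Ṗ = ρ(p + σκ) with ρ, σ > 0 and κ defined piecewise as in the projection law (κ = b - P if P ≥ b + c; κ = (b - P)S_b(P) if b < P < b + c; κ = 0 if a ≤ P ≤ b; κ = (a - P)S_a(P) if a - c < P < a; κ = a - P if P ≤ a - c, where S_a, S_b take values in (0,1) on their respective intervals), then for any constant P_c with a ≤ P_c ≤ b, (P_c - P)(p - Ṗ/ρ) ≤ -σκ² ≤ 0. -/
theorem projection_function_inequality (a b c ρ σ p P Pdot Pc κ : ℝ)
    (Sa Sb : ℝ → ℝ)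
    (hac : 0 < a - c) (hab : a ≤ b) (hc : 0 < c) (hρ : 0 < ρ) (hσ : 0 < σ)
    (hSa : ∀ x, a - c < x → x < a → 0 < Sa x ∧ Sa x < 1)
    (hSb : ∀ x, b < x → x < b + c → 0 < Sb x ∧ Sb x < 1)
    (hκ : κ = if b + c ≤ P then b - P
          else if b < P then (b - P) * Sb P
          else if a ≤ P then 0
          else if a - c < P then (a - P) * Sa P
          else a - P)
    (hPdot : Pdot = ρ * (p + σ * κ))
    (hPc : a ≤ Pc ∧ Pc ≤ b) :
    (Pc - P) * (p - Pdot / ρ) ≤ -σ * κ ^ 2 ∧ -σ * κ ^ 2 ≤ 0 := by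
  obtain ⟨h1, h2⟩ := hPc
  have hρ' : ρ ≠ 0 := ne_of_gt hρ
  have hp : p - Pdot / ρ = -(σ * κ) := by
    rw [hPdot]; field_simp; ring
  have hmain : κ ^ 2 ≤ (Pc - P) * κ := by
    split_ifs at hκ with H1 H2 H3 H4
    · nlinarith
    · push_neg at H1
      obtain ⟨hs0, hs1⟩ := hSb P H2 H1
      have hk0 : κ < 0 := by
        rw [hκ]; exact mul_neg_of_neg_of_pos (by linarith) hs0
      have hk : Pc - P < κ := by
        rw [hκ]; nlinarith
      nlinarith
    · nlinarith
    · push_neg at H3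
      obtain ⟨hs0, hs1⟩ := hSa P H4 H3
      have hk0 : 0 < κ := by
        rw [hκ]; exact mul_pos (by linarith) hs0
      have hk : κ < Pc - P := by
        rw [hκ]; nlinarith
      nlinarith
    · push_neg at H4
      nlinarith
  constructor
  · rw [hp]; nlinarith
  · nlinarith [sq_nonneg κ]
end

section
/- Intermediate subsystem Lyapunov bound: if θ_{i1}ė_i = -λ_i e_i - δ_{i-1}g_{i-1}e_{i-1} + g_i e_{i+1} + Y_i(θ_i - θ̂_i), and each parameter estimate satisfies (θ_{iζ} - θ̂_{iζ})(e_i Y_{iζ} - θ̂̇_{iζ}/ρ_{iζ}) ≤ 0, then with Δ_i = 1/(δ₁⋯δ_{i-1}), the derivative of ν_i = (Δ_i/2)(θ_{i1}e_i² + Σ_ζ (θ_{iζ} - θ̂_{iζ})²/ρ_{iζ}) satisfies ν̇_i ≤ -Δ_i λ_i e_i² - Δ_{i-1} g_{i-1} e_{i-1} e_i + Δ_i g_i e_i e_{i+1}. -/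
open Real Finset

/-- Intermediate subsystem Lyapunov bound. -/
theorem intermediate_subsystem_lyapunov_bound
    (i : ℕ) (hi : 2 ≤ i) (j : ℕ)
    (θi1 lami : ℝ) (hθi1 : 0 < θi1) (hlami : 0 < lami)
    (δ : ℕ → ℝ) (hδ : ∀ k, 0 < δ k)
    (Δprev Δi : ℝ)
    (hΔprev : Δprev = (∏ k ∈ Finset.Icc 1 (i - 2), δ k)⁻¹)
    (hΔi : Δi = (∏ k ∈ Finset.Icc 1 (i - 1), δ k)⁻¹)
    (ρ : Fin j → ℝ) (hρ : ∀ ζ, 0 < ρ ζ)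
    (eim1 ei eip1 gim1 gi : ℝ → ℝ) (Y : Fin j → ℝ → ℝ)
    (θi : Fin j → ℝ) (θhat θhat' : Fin j → ℝ → ℝ) (ei' : ℝ → ℝ)
    (hθhat : ∀ ζ t, HasDerivAt (θhat ζ) (θhat' ζ t) t)
    (hei : ∀ t, HasDerivAt ei (ei' t) t)
    (hdyn : ∀ t, θi1 * ei' t =
      -lami * ei t - δ (i - 1) * gim1 t * eim1 t + gi t * eip1 t
        + ∑ ζ, Y ζ t * (θi ζ - θhat ζ t))
    (hupd : ∀ ζ t, (θi ζ - θhat ζ t) * (ei t * Y ζ t - θhat' ζ t / ρ ζ) ≤ 0)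
    (ν : ℝ → ℝ)
    (hν : ∀ t, ν t = (Δi / 2) * (θi1 * (ei t)^2 + ∑ ζ, (θi ζ - θhat ζ t)^2 / ρ ζ)) :
    ∀ t, deriv ν t ≤
      -Δi * lami * (ei t)^2 - Δprev * gim1 t * eim1 t * ei t
        + Δi * gi t * ei t * eip1 t := by
  intro t
  have hΔipos : 0 < Δi := by
    rw [hΔi]
    exact inv_pos.mpr (Finset.prod_pos fun k _ => hδ k)
  -- relation Δprev = Δi * δ (i-1)
  have hrel : Δprev = Δi * δ (i - 1) := by
    have hsplit : Finset.Icc 1 (i - 1) = insert (i - 1) (Finset.Icc 1 (i - 2)) := by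
      ext x
      simp only [Finset.mem_Icc, Finset.mem_insert]
      omega
    have hnotmem : i - 1 ∉ Finset.Icc 1 (i - 2) := by
      simp only [Finset.mem_Icc]; omega
    have hP : (0:ℝ) < ∏ k ∈ Finset.Icc 1 (i - 2), δ k :=
      Finset.prod_pos fun k _ => hδ k
    rw [hΔprev, hΔi, hsplit, Finset.prod_insert hnotmem]
    field_simp
    exact (div_self (ne_of_gt (hδ (i - 1)))).symm
  -- derivative of ν
  have hderiv : HasDerivAt ν
      (Δi * (ei t * (θi1 * ei' t) + ∑ ζ, (θi ζ - θhat ζ t) * (-θhat' ζ t) / ρ ζ)) t := by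
    have hfun : ν = fun s => (Δi / 2) * (θi1 * (ei s)^2 + ∑ ζ, (θi ζ - θhat ζ s)^2 / ρ ζ) :=
      funext hν
    rw [hfun]
    have h1 : HasDerivAt (fun s => (ei s)^2) (2 * ei t * ei' t) t := by
      simpa using (hei t).fun_pow 2
    have h2 : HasDerivAt (fun s => ∑ ζ, (θi ζ - θhat ζ s)^2 / ρ ζ)
        (∑ ζ, 2 * (θi ζ - θhat ζ t) * (-θhat' ζ t) / ρ ζ) t := by
      apply HasDerivAt.fun_sum
      intro ζ _
      have h := (((hθhat ζ t).const_sub (θi ζ)).pow 2).div_const (ρ ζ)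
      refine h.congr_deriv ?_
      ring
    have h3 := ((h1.const_mul θi1).fun_add h2).const_mul (Δi / 2)
    refine h3.congr_deriv ?_
    have hS : (∑ ζ, 2 * (θi ζ - θhat ζ t) * (-θhat' ζ t) / ρ ζ)
        = 2 * ∑ ζ, (θi ζ - θhat ζ t) * (-θhat' ζ t) / ρ ζ := by
      rw [Finset.mul_sum]
      exact Finset.sum_congr rfl fun ζ _ => by ring
    rw [hS]
    ring
  rw [hderiv.deriv]
  have hA : (∑ ζ, (θi ζ - θhat ζ t) * (ei t * Y ζ t - θhat' ζ t / ρ ζ)) ≤ 0 :=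
    Finset.sum_nonpos fun ζ _ => hupd ζ t
  have key : Δi * (ei t * (θi1 * ei' t) + ∑ ζ, (θi ζ - θhat ζ t) * (-θhat' ζ t) / ρ ζ)
      = -Δi * lami * (ei t)^2 - Δprev * gim1 t * eim1 t * ei t + Δi * gi t * ei t * eip1 t
        + Δi * ∑ ζ, (θi ζ - θhat ζ t) * (ei t * Y ζ t - θhat' ζ t / ρ ζ) := by
    have hsum : (∑ ζ, (θi ζ - θhat ζ t) * (ei t * Y ζ t - θhat' ζ t / ρ ζ))
        = ei t * (∑ ζ, Y ζ t * (θi ζ - θhat ζ t))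
          + ∑ ζ, (θi ζ - θhat ζ t) * (-θhat' ζ t) / ρ ζ := by
      rw [Finset.mul_sum, ← Finset.sum_add_distrib]
      exact Finset.sum_congr rfl fun ζ _ => by ring
    rw [hdyn t, hrel, hsum]
    ring
  rw [key]
  nlinarith [mul_nonpos_of_nonneg_of_nonpos (le_of_lt hΔipos) hA]
end
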